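/- Let ρ ∈ L¹(ℝ³) ∩ L^{11/3}(ℝ³) be nonnegative with ‖ρ‖₁ ≤ N and ‖ρ‖_{11/3}^{11/3} ≤ C₁N for some constant C₁ > 0. Then there is a constant C > 0 (depending only on C₁) such that ‖ |·|^{-2} * ρ ‖_∞ ≤ C N^{1/3}. -/

import Mathlib

/-!
Split the kernel at radius `R`. On the ball `B_R`, Young's inequality with exponents `11/8` and
`11/3` gives `|y|⁻² ρ ≤ c^{11/8}|y|^{-11/4} / (11/8) + c^{-11/3} ρ^{11/3} / (11/3)`, and
`|y|^{-11/4}` is integrable on `B_R` in `ℝ³` with integral `12 |B_1| R^{1/4}`; outside `B_R`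
the kernel is at most `R⁻²`. Integrating against `ρ(x - ·)` bounds the potential by
`C (c^{11/8} R^{1/4} + c^{-11/3} N + R⁻² N)`, and `R = N^{1/3}`, `c = N^{2/11}` make each term
of order `N^{1/3}`.
-/

open MeasureTheory Real Metric Set Module

section BallIntegral

variable {E : Type*} [NormedAddCommGroup E] [NormedSpace ℝ E] [FiniteDimensional ℝ E]
  [MeasurableSpace E] [BorelSpace E] [Nontrivial E] (μ : Measure E) [μ.IsAddHaarMeasure]

theorem integrableOn_ball_norm_rpow {s : ℝ} (hs : -(finrank ℝ E : ℝ) < s) (R : ℝ) :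
    IntegrableOn (fun x : E => ‖x‖ ^ s) (ball 0 R) μ := by
  refine integrableOn_ball_of_norm_le_rpow finrank_pos (C := 1) (α := -s) (by linarith)
    (.of_forall fun x => ?_) (measurable_norm.pow_const s).aestronglyMeasurable
  rw [neg_neg, one_mul, norm_of_nonneg (by positivity)]

theorem setIntegral_ball_norm_rpow {s : ℝ} (hs : -(finrank ℝ E : ℝ) < s) {R : ℝ}
    (hR : 0 ≤ R) :
    ∫ x in ball (0 : E) R, ‖x‖ ^ s ∂μ =
      finrank ℝ E * μ.real (ball 0 1) * R ^ (s + finrank ℝ E) / (s + finrank ℝ E) := by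
  have hball : ∫ x in ball (0 : E) R, ‖x‖ ^ s ∂μ = ∫ x, (Iio R).indicator (· ^ s) ‖x‖ ∂μ := by
    rw [← integral_indicator measurableSet_ball]
    congr with x
    simp [indicator]
  have hradial : ∫ t in Ioi (0 : ℝ), t ^ (finrank ℝ E - 1) • (Iio R).indicator (· ^ s) t =
      ∫ t in Ioi (0 : ℝ), (Iio R).indicator (· ^ (s + finrank ℝ E - 1)) t := by
    refine setIntegral_congr_fun measurableSet_Ioi fun t (ht : 0 < t) => ?_
    by_cases htR : t < R
    · simp only [indicator_of_mem (show t ∈ Iio R from htR), smul_eq_mul]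
      rw [← rpow_natCast, ← rpow_add ht, Nat.cast_sub finrank_pos]
      congr 1
      ring
    · simp [indicator_of_notMem (show t ∉ Iio R from htR)]
  rw [hball, integral_fun_norm_addHaar, hradial, setIntegral_indicator measurableSet_Iio,
    Ioi_inter_Iio, ← integral_Ioc_eq_integral_Ioo, ← intervalIntegral.integral_of_le hR,
    integral_rpow (Or.inl (by linarith)), sub_add_cancel, zero_rpow (by linarith), sub_zero,
    nsmul_eq_mul, smul_eq_mul]
  ring

end BallIntegral

theorem rpow_neg_mul_le_young {α p q c t a : ℝ} (hpq : p.HolderConjugate q) (hc : 0 < c)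
    (ht : 0 ≤ t) (ha : 0 ≤ a) :
    t ^ (-α) * a ≤ c ^ p / p * t ^ (-(α * p)) + c ^ (-q) / q * a ^ q := by
  have hyoung := young_inequality_of_nonneg (mul_nonneg hc.le (rpow_nonneg ht (-α)))
    (div_nonneg ha hc.le) hpq
  rw [mul_rpow hc.le (rpow_nonneg ht _), ← rpow_mul ht, div_rpow ha hc.le] at hyoung
  calc t ^ (-α) * a = c * t ^ (-α) * (a / c) := by field_simp
    _ ≤ _ := hyoung
    _ = _ := by rw [rpow_neg hc.le, neg_mul]; ring

section Convolution

variable {E : Type*} [NormedAddCommGroup E] [MeasurableSpace E] [OpensMeasurableSpace E]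
  [MeasurableAdd E] [MeasurableNeg E] {μ : Measure E} [μ.IsAddLeftInvariant] [μ.IsNegInvariant]

theorem integral_norm_rpow_neg_mul_le {α p q R c : ℝ} (hα : 0 ≤ α) (hpq : p.HolderConjugate q)
    (hR : 0 < R) (hc : 0 < c) {ρ : E → ℝ} (hρ0 : ∀ x, 0 ≤ ρ x) (hρ : Integrable ρ μ)
    (hρq : Integrable (fun x => ρ x ^ q) μ)
    (hK : IntegrableOn (fun y => ‖y‖ ^ (-(α * p))) (ball 0 R) μ) (x : E) :
    ∫ y, ‖y‖ ^ (-α) * ρ (x - y) ∂μ ≤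
      c ^ p / p * ∫ y in ball 0 R, ‖y‖ ^ (-(α * p)) ∂μ + c ^ (-q) / q * ∫ y, ρ y ^ q ∂μ +
        R ^ (-α) * ∫ y, ρ y ∂μ := by
  set near := (ball (0 : E) R).indicator fun y => c ^ p / p * ‖y‖ ^ (-(α * p))
  have hnear : Integrable near μ :=
    IntegrableOn.integrable_indicator (hK.const_mul _) measurableSet_ball
  have hlarge : Integrable (fun y => c ^ (-q) / q * ρ (x - y) ^ q) μ :=
    (hρq.comp_sub_left x).const_mul _
  have hfar : Integrable (fun y => R ^ (-α) * ρ (x - y)) μ := (hρ.comp_sub_left x).const_mul _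
  have hpointwise : ∀ y, ‖y‖ ^ (-α) * ρ (x - y) ≤
      near y + c ^ (-q) / q * ρ (x - y) ^ q + R ^ (-α) * ρ (x - y) := by
    intro y
    have : 0 ≤ c ^ (-q) / q * ρ (x - y) ^ q :=
      mul_nonneg (div_nonneg (by positivity) hpq.symm.nonneg) (rpow_nonneg (hρ0 _) q)
    have : 0 ≤ R ^ (-α) * ρ (x - y) := mul_nonneg (by positivity) (hρ0 _)
    by_cases hy : y ∈ ball (0 : E) R
    · simp only [near, indicator_of_mem hy]
      linarith [rpow_neg_mul_le_young (α := α) hpq hc (norm_nonneg y) (hρ0 (x - y))]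
    · simp only [near, indicator_of_notMem hy]
      linarith [mul_le_mul_of_nonneg_right
        (rpow_le_rpow_of_nonpos hR (by simpa using hy) (neg_nonpos.2 hα)) (hρ0 (x - y))]
  calc ∫ y, ‖y‖ ^ (-α) * ρ (x - y) ∂μ
      ≤ ∫ y, near y + c ^ (-q) / q * ρ (x - y) ^ q + R ^ (-α) * ρ (x - y) ∂μ :=
        integral_mono_of_nonneg
          (.of_forall fun y => mul_nonneg (by positivity) (hρ0 _))
          ((hnear.add hlarge).add hfar) (.of_forall hpointwise)
    _ = _ := by
        rw [integral_add (f := fun y => near y + c ^ (-q) / q * ρ (x - y) ^ q)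
            (hnear.add hlarge) hfar, integral_add hnear hlarge,
          integral_indicator measurableSet_ball, integral_const_mul, integral_const_mul,
          integral_const_mul, integral_sub_left_eq_self (fun y => ρ y ^ q),
          integral_sub_left_eq_self ρ]

end Convolution

/-- If `ρ ≥ 0` with `‖ρ‖₁ ≤ N` and `‖ρ‖_{11/3}^{11/3} ≤ C₁ N`, then
`‖ |·|⁻² * ρ ‖_∞ ≤ C N^{1/3}` with `C` depending only on `C₁`. -/
theorem stmt4 (C₁ : ℝ) (hC₁ : 0 < C₁) :
    ∃ C > 0, ∀ (N : ℕ), 1 ≤ N →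
      ∀ ρ : EuclideanSpace ℝ (Fin 3) → ℝ,
        Measurable ρ → (∀ x, 0 ≤ ρ x) →
        Integrable ρ → Integrable (fun x => ρ x ^ ((11 : ℝ) / 3)) →
        (∫ x, ρ x) ≤ N →
        (∫ x, ρ x ^ ((11 : ℝ) / 3)) ≤ C₁ * N →
        ∀ x, ∫ y, ‖y‖ ^ (-2 : ℝ) * ρ (x - y) ≤ C * (N : ℝ) ^ ((1 : ℝ) / 3) := by
  set V := volume.real (ball (0 : EuclideanSpace ℝ (Fin 3)) 1)
  refine ⟨96 / 11 * V + 3 / 11 * C₁ + 1, by positivity, ?_⟩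
  intro N hN ρ _ hρ0 hρ hρq hρN hρqN x
  have hN0 : (0 : ℝ) < N := by exact_mod_cast hN
  have hpq : (11 / 8 : ℝ).HolderConjugate (11 / 3) :=
    holderConjugate_iff.2 ⟨by norm_num, by norm_num⟩
  have hdim : -(finrank ℝ (EuclideanSpace ℝ (Fin 3)) : ℝ) < -(2 * (11 / 8)) := by
    rw [finrank_euclideanSpace_fin]; norm_num
  have hsplit := integral_norm_rpow_neg_mul_le (μ := volume) (by norm_num : (0 : ℝ) ≤ 2) hpq
    (rpow_pos_of_pos hN0 (1 / 3)) (rpow_pos_of_pos hN0 (2 / 11)) hρ0 hρ hρq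
    (integrableOn_ball_norm_rpow volume hdim _) x
  rw [setIntegral_ball_norm_rpow volume hdim (rpow_nonneg hN0.le _), finrank_euclideanSpace_fin]
    at hsplit
  refine hsplit.trans ?_
  simp only [← rpow_mul hN0.le]
  norm_num
  have e1 : (N : ℝ) ^ (1 / 4 : ℝ) * N ^ (1 / 12 : ℝ) = N ^ (1 / 3 : ℝ) := by
    rw [← rpow_add hN0]; norm_num
  have e2 : (N : ℝ) ^ (-(2 / 3) : ℝ) * N = N ^ (1 / 3 : ℝ) := by
    rw [← rpow_add_one hN0.ne']; norm_num
  have hq := mul_le_mul_of_nonneg_left hρqN (rpow_nonneg hN0.le (-(2 / 3)))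
  have h1 := mul_le_mul_of_nonneg_left hρN (rpow_nonneg hN0.le (-(2 / 3)))
  linear_combination (3 / 11) * hq + h1 + (96 / 11 * V) * e1 + (3 / 11 * C₁ + 1) * e2
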